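/- With the notation of Example 2, let A(s,x) = x(σ a s λ - 2 λ a s - c exp(-ζ s)), B(s) = 2 λ a s (1 + 2a), D(s) = σ λ a s - 2 λ a s - c exp(-ζ s), E(s,x) = p exp(-ζ s) + 2 λ a s x + 4 λ a² s x. If D(s) ≠ 0, then u* := (1/D(s))·[A(s,x) B(s)²/(2 D(s)) - E(s,x)] satisfies the first-order equation (∂_u f)·(∂_{xx} f)² = 2(∂_x f)·(∂_{xu} f) evaluated at (s, x, u*), where f is the function of the previous statement. -/

import Mathlib

/-! In the variables `(x, u)` the reward `f s` is `(B/2) x² + p e^{-ζs} x + D x u + const`: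
quadratic in the state and affine in the control, with the coupling `x u` carrying the
coefficient `D`. Hence `∂_u f = D x = A`, `∂_xx f = B`, `∂_xu f = D` do not depend on `u`, while
`∂_x f = E + D u` is affine in `u`, so the first-order equation is linear in `u` and `u*` is its
unique root when `D ≠ 0`. -/

def quadBilin (α β γ δ x u : ℝ) : ℝ := α * x ^ 2 + β * x + γ * x * u + δ

section quadBilin

variable (α β γ δ : ℝ)

theorem hasDerivAt_quadBilin_fst (u y : ℝ) :
    HasDerivAt (fun z => quadBilin α β γ δ z u) (2 * α * y + β + γ * u) y := by
  have hquad : (fun z => quadBilin α β γ δ z u) = fun z => α * z ^ 2 + (β + γ * u) * z + δ := by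
    funext z; unfold quadBilin; ring
  rw [hquad]
  exact ((((hasDerivAt_pow 2 y).const_mul α).add ((hasDerivAt_id' y).const_mul (β + γ * u))).add_const
    δ).congr_deriv (by ring)

theorem hasDerivAt_quadBilin_snd (x u : ℝ) :
    HasDerivAt (fun w => quadBilin α β γ δ x w) (γ * x) u := by
  have haff : (fun w => quadBilin α β γ δ x w) = fun w => γ * x * w + (α * x ^ 2 + β * x + δ) := by
    funext w; unfold quadBilin; ring
  rw [haff]
  exact (((hasDerivAt_id' u).const_mul (γ * x)).add_const _).congr_deriv (mul_one _)

theorem deriv_quadBilin_fst (u y : ℝ) :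
    deriv (fun z => quadBilin α β γ δ z u) y = 2 * α * y + β + γ * u :=
  (hasDerivAt_quadBilin_fst α β γ δ u y).deriv

theorem deriv_quadBilin_snd (x u : ℝ) :
    deriv (fun w => quadBilin α β γ δ x w) u = γ * x :=
  (hasDerivAt_quadBilin_snd α β γ δ x u).deriv

theorem deriv_deriv_quadBilin_fst (u x : ℝ) :
    deriv (fun y => deriv (fun z => quadBilin α β γ δ z u) y) x = 2 * α := by
  simp only [deriv_quadBilin_fst]
  exact ((((hasDerivAt_id' x).const_mul (2 * α)).add_const β).add_const (γ * u)).deriv.trans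
    (mul_one _)

theorem deriv_deriv_quadBilin_fst_snd (x u : ℝ) :
    deriv (fun w => deriv (fun y => quadBilin α β γ δ y w) x) u = γ := by
  simp only [deriv_quadBilin_fst]
  exact (((hasDerivAt_id' u).const_mul γ).const_add (2 * α * x + β)).deriv.trans (mul_one _)

end quadBilin

theorem mul_sq_eq_two_mul_add_mul_mul {A B D E u : ℝ} (hD : D ≠ 0)
    (hu : u = 1 / D * (A * B ^ 2 / (2 * D) - E)) : A * B ^ 2 = 2 * (E + D * u) * D := by
  subst hu
  field_simp
  ring

theorem example2_optimal_strategy (ζ p c lam a b σ : ℝ) (f : ℝ → ℝ → ℝ → ℝ)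
    (hf : ∀ s x u, f s x u =
      x * Real.exp (-ζ * s) * (p - c * u) + s * lam * (a * x ^ 2 - b) +
        2 * s * lam * a * x * (a * x - u) + lam * σ * a * s * u * x)
    (s x : ℝ)
    (A B D E ustar : ℝ)
    (hA : A = x * (σ * a * s * lam - 2 * lam * a * s - c * Real.exp (-ζ * s)))
    (hB : B = 2 * lam * a * s * (1 + 2 * a))
    (hD : D = σ * lam * a * s - 2 * lam * a * s - c * Real.exp (-ζ * s))
    (hE : E = p * Real.exp (-ζ * s) + 2 * lam * a * s * x + 4 * lam * a ^ 2 * s * x)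
    (hDne : D ≠ 0)
    (hu : ustar = (1 / D) * (A * B ^ 2 / (2 * D) - E)) :
    deriv (fun w => f s x w) ustar *
        (deriv (fun y => deriv (fun z => f s z ustar) y) x) ^ 2 =
      2 * deriv (fun y => f s y ustar) x *
        deriv (fun w => deriv (fun y => f s y w) x) ustar := by
  have hf_quadBilin : ∀ y w,
      f s y w = quadBilin (B / 2) (p * Real.exp (-ζ * s)) D (-(s * lam * b)) y w := by
    intro y w
    rw [hf, hB, hD, quadBilin]
    ring
  simp only [hf_quadBilin]
  rw [deriv_quadBilin_snd, deriv_deriv_quadBilin_fst, deriv_deriv_quadBilin_fst_snd,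
    deriv_quadBilin_fst]
  have hA_eq : A = D * x := by rw [hA, hD]; ring
  have hE_eq : E = 2 * (B / 2) * x + p * Real.exp (-ζ * s) := by rw [hE, hB]; ring
  rw [← hA_eq, ← hE_eq, mul_div_cancel₀ B two_ne_zero]
  exact mul_sq_eq_two_mul_add_mul_mul hDne hu
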